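/- Let λ > 0 and δ > 0 with λ < δ, set ρ = −λ/δ ∈ (−1,0), and let p(x,y) denote the density of the centered bivariate normal distribution on ℝ² with covariance matrix [[1, −λ], [−λ, δ²]]. Then for every u ∈ ℝ, ( ∫_{ℝ²} y · 1_{y<0} · 1_{x>u} · p(x,y) dx dy ) / ( ∫_{ℝ²} y · 1_{y<0} · p(x,y) dx dy ) = Ψ(u/√(1−ρ²)) − √(2π) · ρ · φ(u) · Φ(−ρu/√(1−ρ²)). (This is the exact peak height distribution formula for a smooth unit-variance nonstationary Gaussian process, where (x,y) plays the role of (X(t), X''(t)) conditionally on X'(t)=0 and ρ is the conditional correlation of X(t) and X''(t) given X'(t)=0.) -/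

import Mathlib

open MeasureTheory Real Matrix

/-- The standard normal pdf. -/
noncomputable def stdPdf (x : ℝ) : ℝ := (Real.sqrt (2 * Real.pi))⁻¹ * Real.exp (-x ^ 2 / 2)

/-- The standard normal cdf. -/
noncomputable def stdCdf (x : ℝ) : ℝ := ∫ s in Set.Iio x, stdPdf s

/-- The standard normal tail probability. -/
noncomputable def stdTail (x : ℝ) : ℝ := 1 - stdCdf x

/-- Density of the centered bivariate normal distribution with covariance matrix Σ. -/
noncomputable def binormDensity (S : Matrix (Fin 2) (Fin 2) ℝ) (x y : ℝ) : ℝ :=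
  (2 * Real.pi)⁻¹ * (Real.sqrt S.det)⁻¹ *
    Real.exp (-(![x, y] ⬝ᵥ S⁻¹.mulVec ![x, y]) / 2)

/-!
Writing `τ = √(δ² - λ²)`, the density factors as `p(x, y) = φ(x) · τ⁻¹ φ((y + λx) / τ)`: given
`X = x`, `Y` is `N(-λx, τ²)`, whose truncated mean `∫_{y<0} y` is `-τ φ(λx/τ) - λx Φ(λx/τ)`.
After integrating out `y`, the `x`-integrand `φ(x) (-τ φ(λx/τ) - λx Φ(λx/τ))` has the elementary
primitive `λ φ(x) Φ(λx/τ) - δ/√(2π) Φ(δx/τ)`, because `φ(x) φ(λx/τ) = φ(δx/τ) / √(2π)`. Its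
limits `0` at `-∞` and `-δ/√(2π)` at `+∞` give both integrals, and `√(1 - ρ²) = τ / δ` turns
their ratio into the stated formula.
-/

open Filter Topology Set ProbabilityTheory

lemma stdPdf_eq_gaussianPDFReal : stdPdf = gaussianPDFReal 0 1 := by
  ext x
  simp [stdPdf, gaussianPDFReal]

lemma stdPdf_pos (x : ℝ) : 0 < stdPdf x := by
  unfold stdPdf; positivity

@[fun_prop]
lemma continuous_stdPdf : Continuous stdPdf := by
  unfold stdPdf; fun_prop

lemma integrable_stdPdf : Integrable stdPdf :=
  stdPdf_eq_gaussianPDFReal ▸ integrable_gaussianPDFReal 0 1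

lemma integrable_mul_stdPdf : Integrable fun x => x * stdPdf x := by
  simpa [stdPdf, mul_left_comm, neg_div, div_eq_inv_mul] using
    (integrable_mul_exp_neg_mul_sq (b := 1 / 2) (by norm_num)).const_mul (√(2 * π))⁻¹

lemma hasDerivAt_stdPdf (x : ℝ) : HasDerivAt stdPdf (-x * stdPdf x) x := by
  have h : HasDerivAt (fun x : ℝ => -x ^ 2 / 2) (-x) x :=
    ((hasDerivAt_pow 2 x).neg.div_const 2).congr_deriv (by simp; ring)
  exact (h.exp.const_mul _).congr_deriv (by simp only [stdPdf]; ring)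

lemma tendsto_stdPdf_cocompact : Tendsto stdPdf (cocompact ℝ) (𝓝 0) := by
  have h : Tendsto (fun x : ℝ => -x ^ 2 / 2) (cocompact ℝ) atBot := by
    have := ((tendsto_pow_atTop two_ne_zero).comp
      (tendsto_norm_cocompact_atTop (E := ℝ))).atTop_div_const two_pos
    simpa [Function.comp_def, neg_div] using tendsto_neg_atTop_atBot.comp this
  have := (Real.tendsto_exp_atBot.comp h).const_mul (√(2 * π))⁻¹
  rwa [mul_zero] at this

lemma stdPdf_mul_stdPdf {a b c : ℝ} (h : a ^ 2 + b ^ 2 = c ^ 2) :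
    stdPdf a * stdPdf b = (√(2 * π))⁻¹ * stdPdf c := by
  simp only [stdPdf]
  rw [mul_mul_mul_comm, ← Real.exp_add, ← h]
  ring_nf

lemma stdCdf_eq_cdf : stdCdf = cdf (gaussianReal 0 1) := by
  ext x
  rw [cdf_eq_real, measureReal_def, gaussianReal_apply_eq_integral _ one_ne_zero,
    ENNReal.toReal_ofReal (setIntegral_nonneg measurableSet_Iic fun _ _ =>
      gaussianPDFReal_nonneg _ _ _),
    stdCdf, ← integral_Iic_eq_integral_Iio, stdPdf_eq_gaussianPDFReal]

lemma hasDerivAt_stdCdf (x : ℝ) : HasDerivAt stdCdf (stdPdf x) x := by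
  have key : stdCdf = fun y => stdCdf 0 + ∫ t in (0:ℝ)..y, stdPdf t := by
    ext y
    rw [stdCdf, stdCdf, ← integral_Iic_eq_integral_Iio, ← integral_Iic_eq_integral_Iio,
      ← intervalIntegral.integral_Iic_sub_Iic integrable_stdPdf.integrableOn
        integrable_stdPdf.integrableOn]
    ring
  rw [key]
  exact (intervalIntegral.integral_hasDerivAt_right integrable_stdPdf.intervalIntegrable
    (continuous_stdPdf.stronglyMeasurableAtFilter _ _) continuous_stdPdf.continuousAt).const_add _

lemma stdCdf_nonneg (x : ℝ) : 0 ≤ stdCdf x := stdCdf_eq_cdf ▸ cdf_nonneg _ x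

lemma stdCdf_le_one (x : ℝ) : stdCdf x ≤ 1 := stdCdf_eq_cdf ▸ cdf_le_one _ x

lemma tendsto_stdCdf_atBot : Tendsto stdCdf atBot (𝓝 0) := stdCdf_eq_cdf ▸ tendsto_cdf_atBot _

lemma tendsto_stdCdf_atTop : Tendsto stdCdf atTop (𝓝 1) := stdCdf_eq_cdf ▸ tendsto_cdf_atTop _

lemma tendsto_stdPdf_mul_stdCdf_comp {l : Filter ℝ} (hl : l ≤ cocompact ℝ) (c : ℝ → ℝ) :
    Tendsto (fun x => stdPdf x * stdCdf (c x)) l (𝓝 0) :=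
  (tendsto_stdPdf_cocompact.mono_left hl).zero_mul_isBoundedUnder_le <|
    isBoundedUnder_of ⟨1, fun x => by
      simpa [abs_of_nonneg (stdCdf_nonneg _)] using stdCdf_le_one (c x)⟩

lemma integrable_deriv_of_nonpos {g g' : ℝ → ℝ} {l l' : ℝ}
    (hderiv : ∀ x, HasDerivAt g (g' x) x) (hg' : ∀ x, g' x ≤ 0)
    (hbot : Tendsto g atBot (𝓝 l)) (htop : Tendsto g atTop (𝓝 l')) : Integrable g' := by
  rw [← integrableOn_univ, ← Iio_union_Ici (a := 0), integrableOn_union,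
    integrableOn_Ici_iff_integrableOn_Ioi]
  refine ⟨?_, integrableOn_Ioi_deriv_of_nonpos' (fun x _ => hderiv x) (fun x _ => hg' x) htop⟩
  have hrefl : IntegrableOn (fun x => -g' (-x)) (Ioi (-0)) :=
    integrableOn_Ioi_deriv_of_nonneg' (g := fun x => g (-x))
      (fun x _ => ((hderiv (-x)).comp x (hasDerivAt_neg x)).congr_deriv (mul_neg_one _))
      (fun x _ => neg_nonneg.2 (hg' _))
      (hbot.comp tendsto_neg_atTop_atBot)
  simpa using hrefl.neg.comp_neg_Iio

noncomputable def lowerPartialMoment (τ a : ℝ) : ℝ :=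
  -(τ * stdPdf (a / τ)) - a * stdCdf (a / τ)

section LowerPartialMoment

variable {τ : ℝ}

lemma integrable_mul_stdPdf_affine (a : ℝ) (hτ : τ ≠ 0) :
    Integrable fun y => y * (τ⁻¹ * stdPdf ((y + a) / τ)) := by
  have h : Integrable fun z => τ⁻¹ * ((τ * z - a) * stdPdf z) :=
    ((integrable_mul_stdPdf.const_mul τ).sub (integrable_stdPdf.const_mul a)).const_mul τ⁻¹
      |>.congr (ae_of_all _ fun z => by simp only [Pi.sub_apply]; ring)
  refine ((h.comp_div hτ).comp_add_right a).congr (ae_of_all _ fun y => ?_)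
  dsimp only
  rw [mul_div_cancel₀ _ hτ, add_sub_cancel_right]
  ring

lemma setIntegral_Iic_zero_mul_stdPdf_affine (a : ℝ) (hτ : 0 < τ) :
    ∫ y in Iic 0, y * (τ⁻¹ * stdPdf ((y + a) / τ)) = lowerPartialMoment τ a := by
  have hderiv : ∀ y ∈ Iic (0:ℝ), HasDerivAt
      (fun y => -(τ * stdPdf ((y + a) / τ)) - a * stdCdf ((y + a) / τ))
      (y * (τ⁻¹ * stdPdf ((y + a) / τ))) y := by
    intro y _
    have hw : HasDerivAt (fun y : ℝ => (y + a) / τ) τ⁻¹ y := by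
      simpa using ((hasDerivAt_id y).add_const a).div_const τ
    have h := ((((hasDerivAt_stdPdf _).comp y hw).const_mul τ).neg).sub
      (((hasDerivAt_stdCdf _).comp y hw).const_mul a)
    refine h.congr_deriv ?_
    field_simp
    ring
  have htend : Tendsto (fun y => -(τ * stdPdf ((y + a) / τ)) - a * stdCdf ((y + a) / τ))
      atBot (𝓝 0) := by
    have hw : Tendsto (fun y : ℝ => (y + a) / τ) atBot atBot :=
      (tendsto_atBot_add_const_right _ a tendsto_id).atBot_div_const hτ
    simpa using ((((tendsto_stdPdf_cocompact.mono_left atBot_le_cocompact).comp hw).const_mul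
      τ).neg.sub ((tendsto_stdCdf_atBot.comp hw).const_mul a))
  rw [integral_Iic_of_hasDerivAt_of_tendsto' hderiv
    (integrable_mul_stdPdf_affine a hτ.ne').integrableOn htend, lowerPartialMoment]
  simp

lemma lowerPartialMoment_nonpos (a : ℝ) (hτ : 0 < τ) : lowerPartialMoment τ a ≤ 0 := by
  rw [← setIntegral_Iic_zero_mul_stdPdf_affine a hτ]
  exact setIntegral_nonpos measurableSet_Iic fun y hy =>
    mul_nonpos_of_nonpos_of_nonneg hy (by have := stdPdf_pos ((y + a) / τ); positivity)

lemma mul_ite_neg_eq_indicator (a : ℝ) :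
    (fun y => y * (if y < 0 then (1 : ℝ) else 0) * (τ⁻¹ * stdPdf ((y + a) / τ))) =
      (Iio 0).indicator fun y => y * (τ⁻¹ * stdPdf ((y + a) / τ)) := by
  ext y
  by_cases hy : y < 0 <;> simp [hy]

lemma integrable_mul_ite_neg (a : ℝ) (hτ : τ ≠ 0) :
    Integrable fun y => y * (if y < 0 then (1 : ℝ) else 0) * (τ⁻¹ * stdPdf ((y + a) / τ)) := by
  rw [mul_ite_neg_eq_indicator]
  exact (integrable_mul_stdPdf_affine a hτ).indicator measurableSet_Iio

lemma integral_mul_ite_neg (a : ℝ) (hτ : 0 < τ) :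
    ∫ y, y * (if y < 0 then (1 : ℝ) else 0) * (τ⁻¹ * stdPdf ((y + a) / τ)) =
      lowerPartialMoment τ a := by
  rw [mul_ite_neg_eq_indicator, integral_indicator measurableSet_Iio,
    ← integral_Iic_eq_integral_Iio, setIntegral_Iic_zero_mul_stdPdf_affine a hτ]

end LowerPartialMoment

noncomputable def peakPrimitive (lam τ δ x : ℝ) : ℝ :=
  lam * (stdPdf x * stdCdf (lam * x / τ)) - δ / √(2 * π) * stdCdf (δ * x / τ)

section PeakPrimitive

variable {lam τ δ : ℝ}

lemma hasDerivAt_peakPrimitive (hτ : τ ≠ 0) (hδ : δ ^ 2 = lam ^ 2 + τ ^ 2) (x : ℝ) :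
    HasDerivAt (peakPrimitive lam τ δ) (stdPdf x * lowerPartialMoment τ (lam * x)) x := by
  have hprod : stdPdf (δ * x / τ) = √(2 * π) * (stdPdf x * stdPdf (lam * x / τ)) := by
    rw [stdPdf_mul_stdPdf (c := δ * x / τ) (by field_simp; linear_combination (-x ^ 2) * hδ),
      mul_inv_cancel_left₀ (by positivity)]
  have hlin (c : ℝ) : HasDerivAt (fun x : ℝ => c * x / τ) (c / τ) x := by
    simpa using ((hasDerivAt_id x).const_mul c).div_const τ
  have h := ((hasDerivAt_stdPdf x).mul ((hasDerivAt_stdCdf _).comp x (hlin lam))).const_mul lam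
    |>.sub (((hasDerivAt_stdCdf _).comp x (hlin δ)).const_mul (δ / √(2 * π)))
  refine h.congr_deriv ?_
  simp only [Function.comp_apply]
  rw [hprod, lowerPartialMoment]
  generalize stdPdf (lam * x / τ) = p
  field_simp
  linear_combination (-(stdPdf x * p)) * hδ

lemma tendsto_peakPrimitive_atBot (hτ : 0 < τ) (hδ : 0 < δ) :
    Tendsto (peakPrimitive lam τ δ) atBot (𝓝 0) := by
  have hw : Tendsto (fun x : ℝ => δ * x / τ) atBot atBot :=
    (tendsto_id.const_mul_atBot hδ).atBot_div_const hτ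
  have h := ((tendsto_stdPdf_mul_stdCdf_comp atBot_le_cocompact (lam * · / τ)).const_mul lam).sub
    ((tendsto_stdCdf_atBot.comp hw).const_mul (δ / √(2 * π)))
  rwa [mul_zero, mul_zero, sub_zero] at h

lemma tendsto_peakPrimitive_atTop (hτ : 0 < τ) (hδ : 0 < δ) :
    Tendsto (peakPrimitive lam τ δ) atTop (𝓝 (-(δ / √(2 * π)))) := by
  have hw : Tendsto (fun x : ℝ => δ * x / τ) atTop atTop :=
    (tendsto_id.const_mul_atTop hδ).atTop_div_const hτ
  have h := ((tendsto_stdPdf_mul_stdCdf_comp atTop_le_cocompact (lam * · / τ)).const_mul lam).sub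
    ((tendsto_stdCdf_atTop.comp hw).const_mul (δ / √(2 * π)))
  rwa [mul_zero, mul_one, zero_sub] at h

end PeakPrimitive

section Marginal

variable {lam τ δ : ℝ}

lemma integrable_stdPdf_mul_lowerPartialMoment (hτ : 0 < τ) :
    Integrable fun x => stdPdf x * lowerPartialMoment τ (lam * x) := by
  have hδ : 0 < √(lam ^ 2 + τ ^ 2) := by positivity
  exact integrable_deriv_of_nonpos
    (hasDerivAt_peakPrimitive hτ.ne' (Real.sq_sqrt (by positivity)))
    (fun x => mul_nonpos_of_nonneg_of_nonpos (stdPdf_pos x).le (lowerPartialMoment_nonpos _ hτ))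
    (tendsto_peakPrimitive_atBot hτ hδ) (tendsto_peakPrimitive_atTop hτ hδ)

lemma setIntegral_Ioi_stdPdf_mul_lowerPartialMoment (hτ : 0 < τ) (hδ : 0 < δ)
    (hδτ : δ ^ 2 = lam ^ 2 + τ ^ 2) (u : ℝ) :
    ∫ x in Ioi u, stdPdf x * lowerPartialMoment τ (lam * x) =
      -(δ / √(2 * π)) - peakPrimitive lam τ δ u :=
  integral_Ioi_of_hasDerivAt_of_tendsto' (fun x _ => hasDerivAt_peakPrimitive hτ.ne' hδτ x)
    (integrable_stdPdf_mul_lowerPartialMoment hτ).integrableOn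
    (tendsto_peakPrimitive_atTop hτ hδ)

lemma integral_stdPdf_mul_lowerPartialMoment (hτ : 0 < τ) (hδ : 0 < δ)
    (hδτ : δ ^ 2 = lam ^ 2 + τ ^ 2) :
    ∫ x, stdPdf x * lowerPartialMoment τ (lam * x) = -(δ / √(2 * π)) := by
  rw [integral_of_hasDerivAt_of_tendsto (hasDerivAt_peakPrimitive hτ.ne' hδτ)
    (integrable_stdPdf_mul_lowerPartialMoment hτ) (tendsto_peakPrimitive_atBot hτ hδ)
    (tendsto_peakPrimitive_atTop hτ hδ), sub_zero]

end Marginal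

section Joint

variable {τ : ℝ}

lemma mul_ite_neg_nonpos (y : ℝ) : y * (if y < 0 then (1 : ℝ) else 0) ≤ 0 := by
  split_ifs with hy <;> linarith

lemma integral_mul_ite_neg_mul_stdPdf (lam : ℝ) (hτ : 0 < τ) (x : ℝ) :
    ∫ y, y * (if y < 0 then (1 : ℝ) else 0) *
        (stdPdf x * (τ⁻¹ * stdPdf ((y + lam * x) / τ))) =
      stdPdf x * lowerPartialMoment τ (lam * x) := by
  simp_rw [mul_left_comm _ (stdPdf x), integral_const_mul, integral_mul_ite_neg _ hτ]

lemma integrable_mul_ite_neg_mul_stdPdf (lam : ℝ) (hτ : 0 < τ) :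
    Integrable fun v : ℝ × ℝ => v.2 * (if v.2 < 0 then (1 : ℝ) else 0) *
      (stdPdf v.1 * (τ⁻¹ * stdPdf ((v.2 + lam * v.1) / τ))) := by
  have hite : Measurable fun v : ℝ × ℝ => if v.2 < 0 then (1 : ℝ) else 0 :=
    Measurable.ite (measurableSet_lt measurable_snd measurable_const) measurable_const
      measurable_const
  rw [Measure.volume_eq_prod, integrable_prod_iff (by fun_prop)]
  refine ⟨ae_of_all _ fun x => ?_, ?_⟩
  · simpa only [mul_left_comm _ (stdPdf x)] using
      (integrable_mul_ite_neg (lam * x) hτ.ne').const_mul (stdPdf x)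
  · refine (integrable_stdPdf_mul_lowerPartialMoment (lam := lam) hτ).neg.congr
      (ae_of_all _ fun x => ?_)
    rw [Pi.neg_apply, ← integral_mul_ite_neg_mul_stdPdf lam hτ, ← integral_neg]
    congr with y
    rw [Real.norm_of_nonpos (mul_nonpos_of_nonpos_of_nonneg (mul_ite_neg_nonpos y) (by
      have := stdPdf_pos x; have := stdPdf_pos ((y + lam * x) / τ); positivity))]

lemma integral_prod_mul_ite_neg_mul_ite_gt (lam : ℝ) (hτ : 0 < τ) (u : ℝ) :
    ∫ v : ℝ × ℝ, v.2 * (if v.2 < 0 then (1 : ℝ) else 0) * (if v.1 > u then (1 : ℝ) else 0) *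
        (stdPdf v.1 * (τ⁻¹ * stdPdf ((v.2 + lam * v.1) / τ))) =
      ∫ x in Ioi u, stdPdf x * lowerPartialMoment τ (lam * x) := by
  have hind : (fun v : ℝ × ℝ => v.2 * (if v.2 < 0 then (1 : ℝ) else 0) *
      (if v.1 > u then (1 : ℝ) else 0) * (stdPdf v.1 * (τ⁻¹ * stdPdf ((v.2 + lam * v.1) / τ)))) =
      (Ioi u ×ˢ univ).indicator fun v => v.2 * (if v.2 < 0 then (1 : ℝ) else 0) *
        (stdPdf v.1 * (τ⁻¹ * stdPdf ((v.2 + lam * v.1) / τ))) := by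
    ext v
    by_cases hv : u < v.1 <;> simp [hv]
  rw [hind, integral_indicator (measurableSet_Ioi.prod MeasurableSet.univ),
    Measure.volume_eq_prod, setIntegral_prod _
      (integrable_mul_ite_neg_mul_stdPdf lam hτ).integrableOn]
  simp only [Measure.restrict_univ, integral_mul_ite_neg_mul_stdPdf lam hτ]

lemma integral_prod_mul_ite_neg_mul_stdPdf (lam : ℝ) (hτ : 0 < τ) :
    ∫ v : ℝ × ℝ, v.2 * (if v.2 < 0 then (1 : ℝ) else 0) *
        (stdPdf v.1 * (τ⁻¹ * stdPdf ((v.2 + lam * v.1) / τ))) =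
      ∫ x, stdPdf x * lowerPartialMoment τ (lam * x) := by
  rw [Measure.volume_eq_prod, integral_prod _ (integrable_mul_ite_neg_mul_stdPdf lam hτ)]
  simp only [integral_mul_ite_neg_mul_stdPdf lam hτ]

end Joint

lemma binormDensity_eq {lam δ τ : ℝ} (hτ : 0 < τ) (hτ2 : τ ^ 2 = δ ^ 2 - lam ^ 2) (x y : ℝ) :
    binormDensity !![1, -lam; -lam, δ ^ 2] x y =
      stdPdf x * (τ⁻¹ * stdPdf ((y + lam * x) / τ)) := by
  have hdet : (!![1, -lam; -lam, δ ^ 2] : Matrix (Fin 2) (Fin 2) ℝ).det = τ ^ 2 := by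
    rw [Matrix.det_fin_two_of]
    linarith
  have hq : ![x, y] ⬝ᵥ (!![1, -lam; -lam, δ ^ 2] : Matrix (Fin 2) (Fin 2) ℝ)⁻¹ *ᵥ ![x, y] =
      x ^ 2 + ((y + lam * x) / τ) ^ 2 := by
    rw [Matrix.inv_def, Matrix.adjugate_fin_two, hdet, Ring.inverse_eq_inv']
    simp [Matrix.mulVec, dotProduct, Fin.sum_univ_two]
    field_simp
    linear_combination (-x ^ 2) * hτ2
  have hπ : (2 * π)⁻¹ = (√(2 * π))⁻¹ * (√(2 * π))⁻¹ := by
    rw [← mul_inv, Real.mul_self_sqrt (by positivity)]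
  rw [binormDensity, hq, hdet, Real.sqrt_sq hτ.le, hπ, neg_add, add_div, Real.exp_add, stdPdf,
    stdPdf]
  ring

theorem stmt_1_general (lam δ : ℝ) (hlam : 0 < lam) (hlt : lam < δ) (u : ℝ) :
    (∫ v : ℝ × ℝ,
        v.2 * (if v.2 < 0 then (1 : ℝ) else 0) * (if v.1 > u then (1 : ℝ) else 0) *
          binormDensity !![1, -lam; -lam, δ ^ 2] v.1 v.2) /
      (∫ v : ℝ × ℝ,
        v.2 * (if v.2 < 0 then (1 : ℝ) else 0) *
          binormDensity !![1, -lam; -lam, δ ^ 2] v.1 v.2) =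
    stdTail (u / Real.sqrt (1 - (-lam / δ) ^ 2)) -
      Real.sqrt (2 * Real.pi) * (-lam / δ) * stdPdf u *
        stdCdf (-(-lam / δ) * u / Real.sqrt (1 - (-lam / δ) ^ 2)) := by
  have hδ : 0 < δ := hlam.trans hlt
  set τ := √(δ ^ 2 - lam ^ 2)
  have hτ : 0 < τ := Real.sqrt_pos.2 (by nlinarith)
  have hτ2 : τ ^ 2 = δ ^ 2 - lam ^ 2 := Real.sq_sqrt (by nlinarith)
  have hρ : √(1 - (-lam / δ) ^ 2) = τ / δ := by
    rw [← Real.sqrt_sq (div_pos hτ hδ).le]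
    congr 1
    rw [div_pow τ, hτ2]
    field_simp
  simp_rw [binormDensity_eq hτ hτ2]
  rw [integral_prod_mul_ite_neg_mul_ite_gt lam hτ u, integral_prod_mul_ite_neg_mul_stdPdf lam hτ,
    setIntegral_Ioi_stdPdf_mul_lowerPartialMoment hτ hδ (by linarith) u,
    integral_stdPdf_mul_lowerPartialMoment hτ hδ (by linarith), hρ,
    show u / (τ / δ) = δ * u / τ by field_simp, show -(-lam / δ) * u / (τ / δ) = lam * u / τ by
      field_simp, peakPrimitive, stdTail]
  field_simp
  ring

theorem stmt_1 (lam δ : ℝ) (hlam : 0 < lam) (hδ : 0 < δ) (hlt : lam < δ) (u : ℝ) :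
    (∫ v : ℝ × ℝ,
        v.2 * (if v.2 < 0 then (1 : ℝ) else 0) * (if v.1 > u then (1 : ℝ) else 0) *
          binormDensity !![1, -lam; -lam, δ ^ 2] v.1 v.2) /
      (∫ v : ℝ × ℝ,
        v.2 * (if v.2 < 0 then (1 : ℝ) else 0) *
          binormDensity !![1, -lam; -lam, δ ^ 2] v.1 v.2) =
    stdTail (u / Real.sqrt (1 - (-lam / δ) ^ 2)) -
      Real.sqrt (2 * Real.pi) * (-lam / δ) * stdPdf u *
        stdCdf (-(-lam / δ) * u / Real.sqrt (1 - (-lam / δ) ^ 2)) :=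
  stmt_1_general lam δ hlam hlt u
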